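/- [Proposition 1, first conclusion] Under the stationary setup, assume $\sum_{k\in\mathbb{Z}}|\gamma(k)| < \infty$ and $\sum_{(a,b,c)\in\mathbb{Z}^3}|\mathrm{cum}_4(a,b,c)| < \infty$. Let $(g_k)_{k\ge 0}$ be real numbers with $\sum_{k=0}^{\infty} g_k^2 < \infty$, and let $(B_n)_{n\ge 1}$ be positive integers with $B_n \to \infty$, $B_n/n \to 0$, and $\sqrt{n}\sum_{k=B_n}^{\infty}|\gamma(k)| \to 0$ as $n \to \infty$. For $1 \le k < m$ define $\hat{\gamma}_m(k) = m^{-1}\sum_{t=1}^{m-k} X_t X_{t+k}$. Then for every $\varepsilon > 0$ there exists $N_0$ such that for all $n \ge N_0$ and all integers $m$ with $1 \le m \le n$, $m^2\, \mathbb{E}\Big[\Big(\sum_{k=B_n}^{m-1} g_k\, \hat{\gamma}_m(k)\Big)^2\Big] \le \varepsilon\, n$ (the sum being empty, hence zero, when $m \le B_n$). In other words, $m^2 \mathbb{E}|T_{B_n}(\rho_{B_n}^{m}) - \hat{\theta}_m|^2 = o(n)$ uniformly over $1 \le m \le n$. -/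

import Mathlib

/-!
Expanding the square, `m² E[(∑ₖ gₖ γ̂ₘ(k))²] = ∑_{k,l ≥ B} gₖ gₗ ∑_{t,s} E[Xₜ X_{t+k} Xₛ X_{s+l}]`,
and by stationarity each fourth moment is a fourth cumulant plus three products of
autocovariances. The product `γ(k) γ(l)` contributes at most
`(∑_{k ≥ B} gₖ²) (m ∑_{k ≥ B} |γ(k)|)²`. In each of the other three terms, once `k` (or `l`) and
`t` are fixed, the remaining two indices enter injectively into a summable family, so the row
and column sums of the kernel in `(k, l)` are `O(m)` and the Schur test bounds the three terms
together by `m (∑_{k ≥ B} gₖ²) C` with `C = ∑ |cum₄| + 2 (∑ |γ|)²`. For `m ≤ n` the total is at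
most `n (∑_{k ≥ Bₙ} gₖ²) ((√n ∑_{k ≥ Bₙ} |γ(k)|)² + C) = o(n)`.
-/

open MeasureTheory Filter Finset Function

section Sums

variable {κ τ ι : Type*}

theorem sum_Icc_le_tsum_add {f : ℕ → ℝ} (hf0 : ∀ k, 0 ≤ f k) {b : ℕ}
    (hf : Summable fun j => f (b + j)) (c : ℕ) :
    ∑ k ∈ Icc b c, f k ≤ ∑' j, f (b + j) := by
  rw [← Ico_add_one_right_eq_Icc, sum_Ico_eq_sum_range]
  exact hf.sum_le_tsum _ fun j _ => hf0 _

/-- The Schur test. -/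
theorem sum_sum_mul_mul_le_of_row_col {s : Finset κ} (a : κ → ℝ) {F : κ → κ → ℝ} {M : ℝ}
    (hF : ∀ i ∈ s, ∀ j ∈ s, 0 ≤ F i j) (hrow : ∀ i ∈ s, ∑ j ∈ s, F i j ≤ M)
    (hcol : ∀ j ∈ s, ∑ i ∈ s, F i j ≤ M) :
    ∑ i ∈ s, ∑ j ∈ s, a i * a j * F i j ≤ (∑ i ∈ s, a i ^ 2) * M := by
  have hrow' : ∑ i ∈ s, ∑ j ∈ s, a i ^ 2 * F i j ≤ (∑ i ∈ s, a i ^ 2) * M := by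
    rw [sum_mul]
    gcongr with i hi
    rw [← mul_sum]
    exact mul_le_mul_of_nonneg_left (hrow i hi) (sq_nonneg _)
  have hcol' : ∑ i ∈ s, ∑ j ∈ s, a j ^ 2 * F i j ≤ (∑ i ∈ s, a i ^ 2) * M := by
    rw [sum_comm, sum_mul]
    gcongr with j hj
    rw [← mul_sum]
    exact mul_le_mul_of_nonneg_left (hcol j hj) (sq_nonneg _)
  calc ∑ i ∈ s, ∑ j ∈ s, a i * a j * F i j
      ≤ ∑ i ∈ s, ∑ j ∈ s, (a i ^ 2 * F i j + a j ^ 2 * F i j) / 2 := by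
        gcongr with i hi j hj
        nlinarith [mul_nonneg (sq_nonneg (a i - a j)) (hF i hi j hj)]
    _ ≤ (∑ i ∈ s, a i ^ 2) * M := by
        simp only [← sum_div, sum_add_distrib]
        linarith

theorem sum_sum_sum_le_card_mul_tsum {φ : ι → ℝ} (hφ0 : ∀ i, 0 ≤ φ i) (hφ : Summable φ)
    (K : Finset κ) (U : Finset τ) (e : κ → τ → τ → ι)
    (he : ∀ t, Injective fun p : κ × τ => e p.1 t p.2) :
    ∑ k ∈ K, ∑ t ∈ U, ∑ s ∈ U, φ (e k t s) ≤ #U * ∑' i, φ i := by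
  rw [sum_comm, ← nsmul_eq_mul]
  refine sum_le_card_nsmul _ _ _ fun t _ => ?_
  rw [← sum_product' (f := fun k s => φ (e k t s))]
  exact ((hφ.comp_injective (he t)).sum_le_tsum _ fun _ _ => hφ0 _).trans
    (tsum_comp_le_tsum_of_inj hφ hφ0 (he t))

theorem sum_sum_mul_mul_sum_sum_le_of_injective {φ : ι → ℝ} (hφ0 : ∀ i, 0 ≤ φ i)
    (hφ : Summable φ)
    (K : Finset κ) (U : Finset τ) (a : κ → ℝ) (e : κ → κ → τ → τ → ι)
    (hrow : ∀ k t, Injective fun p : κ × τ => e k p.1 t p.2)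
    (hcol : ∀ l t, Injective fun p : κ × τ => e p.1 l t p.2) :
    ∑ k ∈ K, ∑ l ∈ K, a k * a l * ∑ t ∈ U, ∑ s ∈ U, φ (e k l t s)
      ≤ (∑ k ∈ K, a k ^ 2) * (#U * ∑' i, φ i) :=
  sum_sum_mul_mul_le_of_row_col a
    (fun _ _ _ _ => sum_nonneg fun _ _ => sum_nonneg fun _ _ => hφ0 _)
    (fun k _ => sum_sum_sum_le_card_mul_tsum hφ0 hφ K U (e k) (hrow k))
    (fun l _ => sum_sum_sum_le_card_mul_tsum hφ0 hφ K U (fun k => e k l) (hcol l))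

theorem sum_sum_mul_mul_mul_mul_le {s : Finset κ} (a : κ → ℝ) {c : κ → ℝ}
    (hc : ∀ i ∈ s, 0 ≤ c i) :
    ∑ i ∈ s, ∑ j ∈ s, a i * a j * (c i * c j) ≤ (∑ i ∈ s, a i ^ 2) * (∑ i ∈ s, c i) ^ 2 :=
  calc ∑ i ∈ s, ∑ j ∈ s, a i * a j * (c i * c j) = (∑ i ∈ s, a i * c i) ^ 2 := by
        rw [sq, sum_mul_sum]
        exact sum_congr rfl fun i _ => sum_congr rfl fun j _ => by ring
    _ ≤ (∑ i ∈ s, a i ^ 2) * ∑ i ∈ s, c i ^ 2 := sum_mul_sq_le_sq_mul_sq s a c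
    _ ≤ (∑ i ∈ s, a i ^ 2) * (∑ i ∈ s, c i) ^ 2 := by
        gcongr
        exact sum_sq_le_sq_sum_of_nonneg hc

theorem sum_sum_mul_mul_sum_sum_le_of_abs_le {K : Finset κ} {U : κ → Finset τ} {V : Finset τ}
    (hUV : ∀ k, U k ⊆ V) (c : κ → ℝ) {E F : κ → κ → τ → τ → ℝ}
    (hEF : ∀ k l t s, |E k l t s| ≤ F k l t s) :
    ∑ k ∈ K, ∑ l ∈ K, c k * c l * ∑ t ∈ U k, ∑ s ∈ U l, E k l t s
      ≤ ∑ k ∈ K, ∑ l ∈ K, |c k| * |c l| * ∑ t ∈ V, ∑ s ∈ V, F k l t s := by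
  have hF : ∀ k l t s, 0 ≤ F k l t s := fun k l t s => (abs_nonneg _).trans (hEF k l t s)
  refine sum_le_sum fun k _ => sum_le_sum fun l _ => ?_
  calc c k * c l * ∑ t ∈ U k, ∑ s ∈ U l, E k l t s
      ≤ |c k * c l * ∑ t ∈ U k, ∑ s ∈ U l, E k l t s| := le_abs_self _
    _ ≤ |c k| * |c l| * ∑ t ∈ U k, ∑ s ∈ U l, F k l t s := by
        rw [abs_mul, abs_mul]
        gcongr
        refine (abs_sum_le_sum_abs _ _).trans (sum_le_sum fun t _ => ?_)
        exact (abs_sum_le_sum_abs _ _).trans (sum_le_sum fun s _ => hEF k l t s)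
    _ ≤ |c k| * |c l| * ∑ t ∈ V, ∑ s ∈ V, F k l t s := by
        refine mul_le_mul_of_nonneg_left ?_ (by positivity)
        refine (sum_le_sum fun t _ =>
          sum_le_sum_of_subset_of_nonneg (hUV l) fun s _ _ => hF k l t s).trans ?_
        exact sum_le_sum_of_subset_of_nonneg (hUV k) fun t _ _ => sum_nonneg fun s _ => hF k l t s

end Sums

section Moments

variable {Ω κ τ : Type*} [MeasurableSpace Ω] {μ : Measure Ω}

theorem integrable_mul_mul_mul_of_memLp_four {f₁ f₂ f₃ f₄ : Ω → ℝ} (h₁ : MemLp f₁ 4 μ)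
    (h₂ : MemLp f₂ 4 μ) (h₃ : MemLp f₃ 4 μ) (h₄ : MemLp f₄ 4 μ) :
    Integrable (fun ω => f₁ ω * f₂ ω * (f₃ ω * f₄ ω)) μ := by
  have : ENNReal.HolderTriple 4 4 2 := ⟨by
    rw [show (4 : ENNReal) = 2 * 2 by norm_num, ENNReal.mul_inv (by simp) (by simp), ← mul_add,
      ENNReal.inv_two_add_inv_two, mul_one]⟩
  exact (h₂.mul' h₁ (r := 2)).integrable_mul (h₄.mul' h₃ (r := 2))

theorem integral_sq_sum_mul_sum {K : Finset κ} {U : κ → Finset τ} (c : κ → ℝ)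
    (Y : κ → τ → Ω → ℝ) (hY : ∀ k l t s, Integrable (fun ω => Y k t ω * Y l s ω) μ) :
    ∫ ω, (∑ k ∈ K, c k * ∑ t ∈ U k, Y k t ω) ^ 2 ∂μ
      = ∑ k ∈ K, ∑ l ∈ K, c k * c l * ∑ t ∈ U k, ∑ s ∈ U l, ∫ ω, Y k t ω * Y l s ω ∂μ := by
  have hsq : ∀ ω, (∑ k ∈ K, c k * ∑ t ∈ U k, Y k t ω) ^ 2
      = ∑ k ∈ K, ∑ l ∈ K, c k * c l * ∑ t ∈ U k, ∑ s ∈ U l, Y k t ω * Y l s ω := fun ω => by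
    rw [sq, sum_mul_sum]
    refine sum_congr rfl fun k _ => sum_congr rfl fun l _ => ?_
    rw [mul_mul_mul_comm, sum_mul_sum]
  have hint : ∀ k l, Integrable (fun ω => ∑ t ∈ U k, ∑ s ∈ U l, Y k t ω * Y l s ω) μ :=
    fun k l => integrable_finsetSum _ fun t _ => integrable_finsetSum _ fun s _ => hY k l t s
  simp_rw [hsq]
  rw [integral_finsetSum _ fun k _ => integrable_finsetSum _ fun l _ => (hint k l).const_mul _]
  refine sum_congr rfl fun k _ => ?_
  rw [integral_finsetSum _ fun l _ => (hint k l).const_mul _]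
  refine sum_congr rfl fun l _ => ?_
  rw [integral_const_mul,
    integral_finsetSum _ fun t _ => integrable_finsetSum _ fun s _ => hY k l t s]
  simp_rw [integral_finsetSum _ fun s _ => hY k l _ s]

theorem sq_mul_integral_sq_sum_mul_inv_mul {K : Finset κ} {r : ℝ} (hr : r ≠ 0) (c : κ → ℝ)
    (Z : κ → Ω → ℝ) :
    r ^ 2 * ∫ ω, (∑ k ∈ K, c k * (r⁻¹ * Z k ω)) ^ 2 ∂μ = ∫ ω, (∑ k ∈ K, c k * Z k ω) ^ 2 ∂μ := by
  simp_rw [mul_left_comm _ r⁻¹, ← mul_sum, mul_pow, integral_const_mul, ← mul_assoc, ← mul_pow,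
    mul_inv_cancel₀ hr, one_pow, one_mul]

end Moments

section Stationary

variable {Ω : Type*} [MeasurableSpace Ω] {μ : Measure Ω} {T : ℤ → Ω → Ω} {X0 : Ω → ℝ}
  {X : ℤ → Ω → ℝ}

theorem memLp_of_stationary {p : ENNReal} (hTmp : ∀ a, MeasurePreserving (T a) μ μ)
    (hX0 : MemLp X0 p μ) (hX : ∀ t ω, X t ω = X0 (T t ω)) (t : ℤ) : MemLp (X t) p μ := by
  rw [show X t = X0 ∘ T t from funext (hX t)]
  exact hX0.comp_measurePreserving (hTmp t)

theorem aestronglyMeasurable_of_stationary (hTmp : ∀ a, MeasurePreserving (T a) μ μ)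
    (hX0 : AEStronglyMeasurable X0 μ) (hX : ∀ t ω, X t ω = X0 (T t ω)) (t : ℤ) :
    AEStronglyMeasurable (X t) μ := by
  rw [show X t = X0 ∘ T t from funext (hX t)]
  exact hX0.comp_measurePreserving (hTmp t)

theorem integral_shift_eq (hTadd : ∀ a b : ℤ, T (a + b) = T a ∘ T b)
    (hTmp : ∀ a, MeasurePreserving (T a) μ μ) (hX : ∀ t ω, X t ω = X0 (T t ω))
    {F : (ℤ → ℝ) → ℝ} (hF : AEStronglyMeasurable (fun ω => F fun i => X i ω) μ) (u : ℤ) :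
    ∫ ω, F (fun i => X (i + u) ω) ∂μ = ∫ ω, F (fun i => X i ω) ∂μ := by
  have hshift : ∀ i ω, X (i + u) ω = X i (T u ω) := fun i ω => by
    rw [hX, hX, hTadd]; rfl
  simp_rw [hshift]
  have hmap := integral_map (f := fun ω => F fun i => X i ω) (hTmp u).aemeasurable
    (by rwa [(hTmp u).map_eq])
  rwa [(hTmp u).map_eq, eq_comm] at hmap

theorem autocov_neg (hTadd : ∀ a b : ℤ, T (a + b) = T a ∘ T b)
    (hTmp : ∀ a, MeasurePreserving (T a) μ μ) (hX0 : AEStronglyMeasurable X0 μ)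
    (hX : ∀ t ω, X t ω = X0 (T t ω)) {γ : ℤ → ℝ} (hγ : ∀ k, γ k = ∫ ω, X 0 ω * X k ω ∂μ)
    (k : ℤ) : γ (-k) = γ k := by
  have hXm := aestronglyMeasurable_of_stationary hTmp hX0 hX
  have hshift := integral_shift_eq hTadd hTmp hX (F := fun Y => Y (-k) * Y 0)
    ((hXm _).mul (hXm _)) k
  simp only [neg_add_cancel, zero_add] at hshift
  rw [hγ, hγ, hshift]
  exact integral_congr_ae (.of_forall fun ω => mul_comm _ _)

theorem integral_mul_four_eq (hTadd : ∀ a b : ℤ, T (a + b) = T a ∘ T b)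
    (hTmp : ∀ a, MeasurePreserving (T a) μ μ) (hX0 : AEStronglyMeasurable X0 μ)
    (hX : ∀ t ω, X t ω = X0 (T t ω)) {γ : ℤ → ℝ} (hγ : ∀ k, γ k = ∫ ω, X 0 ω * X k ω ∂μ)
    {cum4 : ℤ → ℤ → ℤ → ℝ}
    (hcum4 : ∀ a b c, cum4 a b c = (∫ ω, X 0 ω * X a ω * X b ω * X c ω ∂μ)
      - γ a * γ (b - c) - γ b * γ (a - c) - γ c * γ (a - b)) (k l t s : ℤ) :
    ∫ ω, X t ω * X (t + k) ω * (X s ω * X (s + l) ω) ∂μ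
      = cum4 k (s - t) (s - t + l) + γ k * γ l + γ (s - t) * γ (s - t + l - k)
        + γ (s - t + l) * γ (s - t - k) := by
  simp_rw [← mul_assoc]
  have hXm := aestronglyMeasurable_of_stationary hTmp hX0 hX
  have hshift := integral_shift_eq hTadd hTmp hX
    (F := fun Y => Y 0 * Y k * Y (s - t) * Y (s - t + l))
    ((((hXm _).mul (hXm _)).mul (hXm _)).mul (hXm _)) t
  have hγneg := autocov_neg hTadd hTmp hX0 hX hγ
  beta_reduce at hshift
  rw [zero_add, add_comm k, sub_add_cancel, show s - t + l + t = s + l by ring] at hshift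
  rw [hshift, hcum4, show s - t - (s - t + l) = -l by ring, hγneg,
    show k - (s - t + l) = -(s - t + l - k) by ring, hγneg,
    show k - (s - t) = -(s - t - k) by ring, hγneg]
  ring

theorem abs_integral_mul_four_le (hTadd : ∀ a b : ℤ, T (a + b) = T a ∘ T b)
    (hTmp : ∀ a, MeasurePreserving (T a) μ μ) (hX0 : AEStronglyMeasurable X0 μ)
    (hX : ∀ t ω, X t ω = X0 (T t ω)) {γ : ℤ → ℝ} (hγ : ∀ k, γ k = ∫ ω, X 0 ω * X k ω ∂μ)
    {cum4 : ℤ → ℤ → ℤ → ℝ}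
    (hcum4 : ∀ a b c, cum4 a b c = (∫ ω, X 0 ω * X a ω * X b ω * X c ω ∂μ)
      - γ a * γ (b - c) - γ b * γ (a - c) - γ c * γ (a - b)) (k l t s : ℤ) :
    |∫ ω, X t ω * X (t + k) ω * (X s ω * X (s + l) ω) ∂μ|
      ≤ |cum4 k (s - t) (s - t + l)| + |γ k| * |γ l| + |γ (s - t)| * |γ (s - t + l - k)|
        + |γ (s - t + l)| * |γ (s - t - k)| := by
  rw [integral_mul_four_eq hTadd hTmp hX0 hX hγ hcum4, ← abs_mul, ← abs_mul, ← abs_mul]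
  exact (abs_add_le _ _).trans
    (add_le_add ((abs_add_le _ _).trans (add_le_add (abs_add_le _ _) le_rfl)) le_rfl)

end Stationary

section Estimate

variable {γ : ℤ → ℝ} {cum4 : ℤ → ℤ → ℤ → ℝ}

theorem sum_sum_mul_mul_sum_sum_cum4_add_autocov_le (hγsum : Summable fun k : ℤ => |γ k|)
    (hcumsum : Summable fun p : ℤ × ℤ × ℤ => |cum4 p.1 p.2.1 p.2.2|) (K V : Finset ℕ)
    (a : ℕ → ℝ) :
    ∑ k ∈ K, ∑ l ∈ K, a k * a l * ∑ t ∈ V, ∑ s ∈ V,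
        (|cum4 k (s - t) (s - t + l)| + |γ k| * |γ l| + |γ (s - t)| * |γ (s - t + l - k)|
          + |γ (s - t + l)| * |γ (s - t - k)|)
      ≤ (∑ k ∈ K, a k ^ 2) * ((#V * ∑ k ∈ K, |γ k|) ^ 2
          + #V * (∑' p : ℤ × ℤ × ℤ, |cum4 p.1 p.2.1 p.2.2| + 2 * (∑' k, |γ k|) ^ 2)) := by
  have hcum := sum_sum_mul_mul_sum_sum_le_of_injective
    (φ := fun p : ℤ × ℤ × ℤ => |cum4 p.1 p.2.1 p.2.2|) (fun _ => abs_nonneg _) hcumsum K V a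
    (fun k l t s => ((k : ℤ), (s : ℤ) - t, (s : ℤ) - t + l))
    (fun _ _ ⟨_, _⟩ ⟨_, _⟩ h => by simp only [Prod.mk.injEq] at h ⊢; omega)
    (fun _ _ ⟨_, _⟩ ⟨_, _⟩ h => by simp only [Prod.mk.injEq] at h ⊢; omega)
  have hγγ : Summable fun p : ℤ × ℤ => |γ p.1| * |γ p.2| :=
    hγsum.mul_of_nonneg hγsum (fun _ => abs_nonneg _) (fun _ => abs_nonneg _)
  have hγγ_tsum : ∑' p : ℤ × ℤ, |γ p.1| * |γ p.2| = (∑' k, |γ k|) ^ 2 := by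
    rw [sq, tsum_mul_tsum_of_summable_norm] <;> simpa using hγsum
  have hcross₁ := sum_sum_mul_mul_sum_sum_le_of_injective
    (φ := fun p : ℤ × ℤ => |γ p.1| * |γ p.2|) (fun _ => by positivity) hγγ K V a
    (fun k l t s => ((s : ℤ) - t, (s : ℤ) - t + l - k))
    (fun _ _ ⟨_, _⟩ ⟨_, _⟩ h => by simp only [Prod.mk.injEq] at h ⊢; omega)
    (fun _ _ ⟨_, _⟩ ⟨_, _⟩ h => by simp only [Prod.mk.injEq] at h ⊢; omega)
  have hcross₂ := sum_sum_mul_mul_sum_sum_le_of_injective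
    (φ := fun p : ℤ × ℤ => |γ p.1| * |γ p.2|) (fun _ => by positivity) hγγ K V a
    (fun k l t s => ((s : ℤ) - t + l, (s : ℤ) - t - k))
    (fun _ _ ⟨_, _⟩ ⟨_, _⟩ h => by simp only [Prod.mk.injEq] at h ⊢; omega)
    (fun _ _ ⟨_, _⟩ ⟨_, _⟩ h => by simp only [Prod.mk.injEq] at h ⊢; omega)
  have hdiag := sum_sum_mul_mul_mul_mul_le (s := K) a
    (c := fun k => (#V : ℝ) * |γ k|) fun _ _ => by positivity
  have hdiag_eq : ∑ k ∈ K, ∑ l ∈ K, a k * a l * ∑ t ∈ V, ∑ s ∈ V, |γ k| * |γ l|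
      = ∑ k ∈ K, ∑ l ∈ K, a k * a l * ((#V : ℝ) * |γ k| * ((#V : ℝ) * |γ l|)) :=
    sum_congr rfl fun k _ => sum_congr rfl fun l _ => by
      rw [sum_const, sum_const, nsmul_eq_mul, nsmul_eq_mul]; ring
  rw [← mul_sum, ← hdiag_eq] at hdiag
  rw [hγγ_tsum] at hcross₁ hcross₂
  simp only [mul_add, sum_add_distrib]
  linarith

variable {Ω : Type*} [MeasurableSpace Ω] {μ : Measure Ω} {T : ℤ → Ω → Ω} {X0 : Ω → ℝ}
  {X : ℤ → Ω → ℝ}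

theorem sq_mul_integral_sq_sum_autocov_le (hTadd : ∀ a b : ℤ, T (a + b) = T a ∘ T b)
    (hTmp : ∀ a, MeasurePreserving (T a) μ μ) (hmom4 : MemLp X0 4 μ)
    (hX : ∀ t ω, X t ω = X0 (T t ω)) (hγ : ∀ k, γ k = ∫ ω, X 0 ω * X k ω ∂μ)
    (hcum4 : ∀ a b c, cum4 a b c = (∫ ω, X 0 ω * X a ω * X b ω * X c ω ∂μ)
      - γ a * γ (b - c) - γ b * γ (a - c) - γ c * γ (a - b))
    (hγsum : Summable fun k : ℤ => |γ k|)
    (hcumsum : Summable fun p : ℤ × ℤ × ℤ => |cum4 p.1 p.2.1 p.2.2|)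
    {g : ℕ → ℝ} (hg : Summable fun k => g k ^ 2) (b : ℕ) {m : ℕ} (hm : m ≠ 0) :
    (m : ℝ) ^ 2 * ∫ ω, (∑ k ∈ Icc b (m - 1), g k * ((m : ℝ)⁻¹ * ∑ t ∈ Icc 1 (m - k),
        X (t : ℤ) ω * X ((t : ℤ) + (k : ℤ)) ω)) ^ 2 ∂μ
      ≤ (∑' j, g (b + j) ^ 2) * ((m * ∑' j : ℕ, |γ ((b : ℤ) + (j : ℤ))|) ^ 2
          + m * (∑' p : ℤ × ℤ × ℤ, |cum4 p.1 p.2.1 p.2.2| + 2 * (∑' k, |γ k|) ^ 2)) := by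
  have hXm := memLp_of_stationary hTmp hmom4 hX
  have hgK : ∑ k ∈ Icc b (m - 1), |g k| ^ 2 ≤ ∑' j, g (b + j) ^ 2 := by
    simpa only [sq_abs] using sum_Icc_le_tsum_add (fun k => sq_nonneg (g k))
      (hg.comp_injective (add_right_injective b)) (m - 1)
  have hγK : ∑ k ∈ Icc b (m - 1), |γ k| ≤ ∑' j : ℕ, |γ ((b : ℤ) + (j : ℤ))| := by
    refine (sum_Icc_le_tsum_add (f := fun k : ℕ => |γ k|) (fun k => abs_nonneg _) ?_ _).trans_eq ?_
    · simpa only [Nat.cast_add, comp_def] using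
        hγsum.comp_injective ((add_right_injective (b : ℤ)).comp Nat.cast_injective)
    · simp only [Nat.cast_add]
  rw [sq_mul_integral_sq_sum_mul_inv_mul (Nat.cast_ne_zero.2 hm),
    integral_sq_sum_mul_sum _ _ fun k l t s =>
      integrable_mul_mul_mul_of_memLp_four (hXm _) (hXm _) (hXm _) (hXm _)]
  calc _ ≤ _ := sum_sum_mul_mul_sum_sum_le_of_abs_le (V := Icc 1 m)
          (fun k => Icc_subset_Icc_right (Nat.sub_le m k)) g fun k l t s =>
            abs_integral_mul_four_le hTadd hTmp hmom4.aestronglyMeasurable hX hγ hcum4 _ _ _ _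
    _ ≤ _ := sum_sum_mul_mul_sum_sum_cum4_add_autocov_le hγsum hcumsum _ _ _
    _ ≤ _ := by
        rw [Nat.card_Icc, add_tsub_cancel_right]
        gcongr

end Estimate

theorem truncated_spectral_mean_tail_uniform_small_general
    {Ω : Type*} [MeasurableSpace Ω] (μ : Measure Ω)
    (T : ℤ → Ω → Ω)
    (hTadd : ∀ a b : ℤ, T (a + b) = T a ∘ T b)
    (hTmp : ∀ a : ℤ, MeasurePreserving (T a) μ μ)
    (X0 : Ω → ℝ)
    (hmom4 : MemLp X0 4 μ)
    (X : ℤ → Ω → ℝ) (hX : ∀ t ω, X t ω = X0 (T t ω))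
    (γ : ℤ → ℝ) (hγ : ∀ k, γ k = ∫ ω, X 0 ω * X k ω ∂μ)
    (cum4 : ℤ → ℤ → ℤ → ℝ)
    (hcum4 : ∀ a b c, cum4 a b c =
      (∫ ω, X 0 ω * X a ω * X b ω * X c ω ∂μ)
        - γ a * γ (b - c) - γ b * γ (a - c) - γ c * γ (a - b))
    (hγsum : Summable fun k : ℤ => |γ k|)
    (hcumsum : Summable fun p : ℤ × ℤ × ℤ => |cum4 p.1 p.2.1 p.2.2|)
    (g : ℕ → ℝ) (hg : Summable fun k => g k ^ 2)
    (B : ℕ → ℕ)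
    (hBtop : Tendsto B atTop atTop)
    (hγtail : Tendsto (fun n : ℕ => Real.sqrt (n : ℝ) * ∑' k : ℕ, |γ ((B n : ℤ) + (k : ℤ))|)
      atTop (nhds 0)) :
    ∀ ε > (0 : ℝ), ∃ N₀ : ℕ, ∀ n ≥ N₀, ∀ m : ℕ, 1 ≤ m → m ≤ n →
      (m : ℝ) ^ 2 * ∫ ω, (∑ k ∈ Finset.Icc (B n) (m - 1),
          g k * ((m : ℝ)⁻¹ * ∑ t ∈ Finset.Icc 1 (m - k),
            X (t : ℤ) ω * X ((t : ℤ) + (k : ℤ)) ω)) ^ 2 ∂μ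
        ≤ ε * n := by
  intro ε hε
  set C := ∑' p : ℤ × ℤ × ℤ, |cum4 p.1 p.2.1 p.2.2| + 2 * (∑' k, |γ k|) ^ 2
  have hgtail : Tendsto (fun n => ∑' j, g (B n + j) ^ 2) atTop (nhds 0) :=
    ((tendsto_sum_nat_add fun k => g k ^ 2).comp hBtop).congr fun n =>
      tsum_congr fun j => by rw [add_comm]
  have hlim := hgtail.mul ((hγtail.pow 2).add_const C)
  rw [zero_pow two_ne_zero, zero_add, zero_mul] at hlim
  obtain ⟨N₀, hN₀⟩ := eventually_atTop.1 (hlim.eventually_lt_const hε)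
  refine ⟨N₀, fun n hn m hm hmn => ?_⟩
  calc _ ≤ (∑' j, g (B n + j) ^ 2) * ((m * ∑' k : ℕ, |γ ((B n : ℤ) + (k : ℤ))|) ^ 2 + m * C) :=
        sq_mul_integral_sq_sum_autocov_le hTadd hTmp hmom4 hX hγ hcum4 hγsum hcumsum hg (B n)
          (by omega)
    _ ≤ (∑' j, g (B n + j) ^ 2) * ((n * ∑' k : ℕ, |γ ((B n : ℤ) + (k : ℤ))|) ^ 2 + n * C) := by
        gcongr
    _ = n * ((∑' j, g (B n + j) ^ 2) * ((√n * ∑' k : ℕ, |γ ((B n : ℤ) + (k : ℤ))|) ^ 2 + C)) := by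
        rw [mul_pow, mul_pow, Real.sq_sqrt n.cast_nonneg]
        ring
    _ ≤ ε * n := by
        rw [mul_comm ε]
        exact mul_le_mul_of_nonneg_left (hN₀ n hn).le n.cast_nonneg

/-- Proposition 1, first conclusion: for a strictly stationary mean-zero
sequence `X t = X0 ∘ T t` (with `T` a measure-preserving `ℤ`-action) with summable
autocovariances and absolutely summable fourth cumulants, square-summable weights
`(g_k)`, and `Bₙ → ∞`, `Bₙ/n → 0`, `√n ∑_{k ≥ Bₙ} |γ(k)| → 0`, one has
`m² E[(∑_{k=Bₙ}^{m-1} g_k γ̂ₘ(k))²] = o(n)` uniformly over `1 ≤ m ≤ n`, where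
`γ̂ₘ(k) = m⁻¹ ∑_{t=1}^{m-k} Xₜ X_{t+k}`. -/
theorem truncated_spectral_mean_tail_uniform_small
    {Ω : Type*} [MeasurableSpace Ω] (μ : Measure Ω) [IsProbabilityMeasure μ]
    (T : ℤ → Ω → Ω)
    (hT0 : T 0 = id)
    (hTadd : ∀ a b : ℤ, T (a + b) = T a ∘ T b)
    (hTmp : ∀ a : ℤ, MeasurePreserving (T a) μ μ)
    (X0 : Ω → ℝ) (hX0 : Measurable X0)
    (hmean : ∫ ω, X0 ω ∂μ = 0)
    (hmom4 : MemLp X0 4 μ)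
    (X : ℤ → Ω → ℝ) (hX : ∀ t ω, X t ω = X0 (T t ω))
    (γ : ℤ → ℝ) (hγ : ∀ k, γ k = ∫ ω, X 0 ω * X k ω ∂μ)
    (cum4 : ℤ → ℤ → ℤ → ℝ)
    (hcum4 : ∀ a b c, cum4 a b c =
      (∫ ω, X 0 ω * X a ω * X b ω * X c ω ∂μ)
        - γ a * γ (b - c) - γ b * γ (a - c) - γ c * γ (a - b))
    (hγsum : Summable fun k : ℤ => |γ k|)
    (hcumsum : Summable fun p : ℤ × ℤ × ℤ => |cum4 p.1 p.2.1 p.2.2|)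
    (g : ℕ → ℝ) (hg : Summable fun k => g k ^ 2)
    (B : ℕ → ℕ) (hBpos : ∀ n, 1 ≤ B n)
    (hBtop : Tendsto B atTop atTop)
    (hBsmall : Tendsto (fun n => (B n : ℝ) / n) atTop (nhds 0))
    (hγtail : Tendsto (fun n : ℕ => Real.sqrt (n : ℝ) * ∑' k : ℕ, |γ ((B n : ℤ) + (k : ℤ))|)
      atTop (nhds 0)) :
    ∀ ε > (0 : ℝ), ∃ N₀ : ℕ, ∀ n ≥ N₀, ∀ m : ℕ, 1 ≤ m → m ≤ n →
      (m : ℝ) ^ 2 * ∫ ω, (∑ k ∈ Finset.Icc (B n) (m - 1),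
          g k * ((m : ℝ)⁻¹ * ∑ t ∈ Finset.Icc 1 (m - k),
            X (t : ℤ) ω * X ((t : ℤ) + (k : ℤ)) ω)) ^ 2 ∂μ
        ≤ ε * n :=
  truncated_spectral_mean_tail_uniform_small_general μ T hTadd hTmp X0 hmom4 X hX γ hγ cum4 hcum4
    hγsum hcumsum g hg B hBtop hγtail
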